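/- ψ(X,Y) = 1 if and only if there exists a Borel measurable function h : ℋ → {1,…,K} such that Y = h(X) almost surely. -/

import Mathlib

open MeasureTheory ProbabilityTheory Filter Set

noncomputable section

/-- Indicator (as a real-valued function) of the event `Y = k`. -/
def ind {Ω : Type*} (Y : Ω → ℕ) (k : ℕ) : Ω → ℝ := fun ω => if Y ω = k then 1 else 0

/-- `p_k = P(Y = k)`. -/
def levelProb {Ω : Type*} [MeasurableSpace Ω] (P : Measure Ω) (Y : Ω → ℕ) (k : ℕ) : ℝ :=
  (P {ω | Y ω = k}).toReal

/-- Covariance of two real-valued random variables. -/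
def cov {Ω : Type*} [MeasurableSpace Ω] (P : Measure Ω) (f g : Ω → ℝ) : ℝ :=
  ∫ ω, f ω * g ω ∂P - (∫ ω, f ω ∂P) * (∫ ω, g ω ∂P)

/-- `Q_k(X) = P(Y = k ∣ X)`, the conditional expectation of `1{Y=k}` given `σ(X)`. -/
def condProb {Ω H : Type*} [MeasurableSpace Ω] [MeasurableSpace H]
    (P : Measure Ω) (X : Ω → H) (Y : Ω → ℕ) (k : ℕ) : Ω → ℝ :=
  P[ind Y k | MeasurableSpace.comap X inferInstance]

/-- The dependence coefficient
`ψ(X,Y) = (1/(K−1)) Σ_{k,l=1}^K Cov(Q_k(X), Q_l(X))² / (p_k p_l)`. -/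
def psi {Ω H : Type*} [MeasurableSpace Ω] [MeasurableSpace H]
    (P : Measure Ω) (X : Ω → H) (Y : Ω → ℕ) (K : ℕ) : ℝ :=
  (1 / ((K : ℝ) - 1)) * ∑ k ∈ Finset.Icc 1 K, ∑ l ∈ Finset.Icc 1 K,
    (cov P (condProb P X Y k) (condProb P X Y l)) ^ 2 / (levelProb P Y k * levelProb P Y l)

/-!
Write `Q_k = P(Y = k ∣ X)` and `p_k = P(Y = k)`. By the tower property
`Cov(Q_k, Q_l) = E[(Q_k - p_k) 1{Y = l}]`, so Cauchy–Schwarz on each event `{Y = l}` gives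
`∑_l Cov(Q_k, Q_l)² / p_l ≤ Var Q_k`, while Pythagoras for the conditional expectation gives
`Var Q_k = p_k (1 - p_k) - ‖1{Y = k} - Q_k‖²`. Dividing by `p_k` and summing over `k`,
`(K - 1) ψ + ∑_k ‖1{Y = k} - Q_k‖² / p_k ≤ K - 1`. Hence `ψ = 1` forces `1{Y = k} = Q_k` a.s.
for every `k`, so `Y = ∑_k k Q_k` a.s. is `σ(X)`-measurable and the Doob–Dynkin lemma yields `h`.
Conversely, if `Y = h(X)` then `Q_k = 1{Y = k}` and `Cov(Q_k, Q_l) = (δ_kl - p_k) p_l`, for which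
the double sum defining `ψ` is exactly `K - 1`.
-/

section ConditionalExpectation

variable {Ω : Type*} {m m₀ : MeasurableSpace Ω} {μ : Measure[m₀] Ω}

theorem integral_mul_condExp_of_stronglyMeasurable [IsFiniteMeasure μ] (hm : m ≤ m₀)
    {f g : Ω → ℝ} (hg : StronglyMeasurable[m] g) (hg₂ : MemLp g 2 μ) (hf : MemLp f 2 μ) :
    ∫ ω, g ω * (μ[f|m]) ω ∂μ = ∫ ω, g ω * f ω ∂μ :=
  calc ∫ ω, g ω * (μ[f|m]) ω ∂μ = ∫ ω, (μ[g * f|m]) ω ∂μ :=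
        integral_congr_ae (condExp_mul_of_stronglyMeasurable_left hg
          (hg₂.integrable_mul hf) (hf.integrable one_le_two)).symm
    _ = ∫ ω, g ω * f ω ∂μ := integral_condExp hm

theorem integral_sq_sub_condExp [IsProbabilityMeasure μ] (hm : m ≤ m₀) {f : Ω → ℝ}
    (hf : MemLp f 2 μ) :
    ∫ ω, (f ω - (μ[f|m]) ω) ^ 2 ∂μ = ∫ ω, f ω ^ 2 ∂μ - ∫ ω, (μ[f|m]) ω ^ 2 ∂μ := by
  have h := integral_condVar_add_variance_condExp hm hf
  rw [condVar, integral_condExp hm, variance_eq_sub hf, variance_eq_sub (hf.condExp one_le_two),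
    integral_condExp hm] at h
  simp only [Pi.pow_apply, Pi.sub_apply] at h
  linarith

end ConditionalExpectation

section SquareIntegrable

variable {α : Type*} [MeasurableSpace α] {μ : Measure α} {f : α → ℝ}

theorem sq_integral_le_measureReal_univ_mul [IsFiniteMeasure μ] (hf : MemLp f 2 μ) :
    (∫ x, f x ∂μ) ^ 2 ≤ μ.real univ * ∫ x, f x ^ 2 ∂μ := by
  have hf₁ : Integrable f μ := hf.integrable one_le_two
  have hquad : ∀ c : ℝ,
      0 ≤ μ.real univ * (c * c) + (-2 * ∫ x, f x ∂μ) * c + ∫ x, f x ^ 2 ∂μ := fun c =>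
    calc 0 ≤ ∫ x, (f x - c) ^ 2 ∂μ := integral_nonneg fun x => sq_nonneg _
      _ = ∫ x, (f x ^ 2 - 2 * c * f x + c ^ 2) ∂μ := by simp_rw [sub_sq, mul_right_comm]
      _ = _ := by
        have hlin : Integrable (fun x => f x ^ 2 - 2 * c * f x) μ :=
          hf.integrable_sq.sub (hf₁.const_mul _)
        rw [integral_add hlin (integrable_const _),
          integral_sub hf.integrable_sq (hf₁.const_mul _), integral_const_mul, integral_const,
          smul_eq_mul]
        ring
  have := discrim_le_zero hquad
  rw [discrim] at this
  linarith

theorem sq_setIntegral_div_measureReal_le [IsFiniteMeasure μ] (hf : MemLp f 2 μ) (s : Set α) :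
    (∫ x in s, f x ∂μ) ^ 2 / μ.real s ≤ ∫ x in s, f x ^ 2 ∂μ := by
  refine div_le_of_le_mul₀ measureReal_nonneg (integral_nonneg fun x => sq_nonneg _) ?_
  rw [mul_comm, ← measureReal_restrict_apply_univ]
  exact sq_integral_le_measureReal_univ_mul (hf.restrict s)

theorem sum_sq_setIntegral_fiber_div_le {β : Type*} [MeasurableSpace β]
    [MeasurableSingletonClass β] [IsFiniteMeasure μ] (hf : MemLp f 2 μ) {Y : α → β}
    (hY : Measurable Y) {s : Finset β} (hYs : ∀ x, Y x ∈ s) :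
    ∑ b ∈ s, (∫ x in Y ⁻¹' {b}, f x ∂μ) ^ 2 / μ.real (Y ⁻¹' {b}) ≤ ∫ x, f x ^ 2 ∂μ :=
  calc ∑ b ∈ s, (∫ x in Y ⁻¹' {b}, f x ∂μ) ^ 2 / μ.real (Y ⁻¹' {b})
      ≤ ∑ b ∈ s, ∫ x in Y ⁻¹' {b}, f x ^ 2 ∂μ :=
        Finset.sum_le_sum fun b _ => sq_setIntegral_div_measureReal_le hf _
    _ = ∫ x in ⋃ b ∈ s, Y ⁻¹' {b}, f x ^ 2 ∂μ :=
        (integral_biUnion_finset s (fun b _ => hY (measurableSet_singleton b))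
          (fun b _ c _ hbc => (disjoint_singleton.2 hbc).preimage Y)
          fun b _ => hf.integrable_sq.integrableOn).symm
    _ = ∫ x, f x ^ 2 ∂μ := by
        rw [show ⋃ b ∈ s, Y ⁻¹' {b} = univ from
          eq_univ_of_forall fun x => mem_biUnion (hYs x) rfl, setIntegral_univ]

theorem ae_eq_of_integral_sub_sq_eq_zero {g : α → ℝ} (hf : MemLp f 2 μ) (hg : MemLp g 2 μ)
    (h : ∫ x, (f x - g x) ^ 2 ∂μ = 0) :
    f =ᵐ[μ] g := by
  have h0 := (integral_eq_zero_iff_of_nonneg (fun x => sq_nonneg (f x - g x))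
    (hf.sub hg).integrable_sq).1 h
  filter_upwards [h0] with x hx
  exact sub_eq_zero.1 (pow_eq_zero_iff two_ne_zero |>.1 hx)

end SquareIntegrable

theorem exists_measurable_comp_of_natCast_ae_eq {Ω H : Type*} [MeasurableSpace Ω]
    [MeasurableSpace H] {μ : Measure Ω} {X : Ω → H} {Y : Ω → ℕ} {s : Finset ℕ} {a : ℕ}
    (ha : a ∈ s) (hYs : ∀ ω, Y ω ∈ s) {Z : Ω → ℝ}
    (hZ : StronglyMeasurable[MeasurableSpace.comap X inferInstance] Z)
    (hYZ : (fun ω => (Y ω : ℝ)) =ᵐ[μ] Z) :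
    ∃ h : H → ℕ, Measurable h ∧ (∀ x, h x ∈ s) ∧ Y =ᵐ[μ] fun ω => h (X ω) := by
  obtain ⟨g, hg, rfl⟩ := hZ.exists_eq_measurable_comp
  have hfloor : Measurable fun x => ⌊g x⌋₊ := hg.measurable.nat_floor
  refine ⟨fun x => if ⌊g x⌋₊ ∈ s then ⌊g x⌋₊ else a,
    Measurable.ite (hfloor s.measurableSet) hfloor measurable_const,
    fun x => by dsimp only; split_ifs <;> assumption, ?_⟩
  filter_upwards [hYZ] with ω hω
  have hY : ⌊g (X ω)⌋₊ = Y ω := by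
    rw [← Function.comp_apply (f := g), ← hω, Nat.floor_natCast]
  simp only [hY, if_pos (hYs ω)]

section Algebra

variable {ι : Type*} [DecidableEq ι] {s : Finset ι} {p : ι → ℝ}

theorem sum_sum_sq_sub_mul_div_mul (hp : ∀ k ∈ s, 0 < p k) (hsum : ∑ k ∈ s, p k = 1) :
    ∑ k ∈ s, ∑ l ∈ s, (((if l = k then 1 else 0) - p k) * p l) ^ 2 / (p k * p l) =
      (s.card : ℝ) - 1 := by
  have hrow : ∀ k ∈ s,
      ∑ l ∈ s, (((if l = k then 1 else 0) - p k) * p l) ^ 2 / (p k * p l) = 1 - p k := by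
    intro k hk
    have hpk := (hp k hk).ne'
    have hoff : ∀ l ∈ s.erase k,
        (((if l = k then 1 else 0) - p k) * p l) ^ 2 / (p k * p l) = p k * p l := by
      intro l hl
      have hpl := (hp l (Finset.mem_of_mem_erase hl)).ne'
      rw [if_neg (Finset.ne_of_mem_erase hl)]
      field_simp
      ring
    rw [← Finset.add_sum_erase s _ hk, Finset.sum_congr rfl hoff, ← Finset.mul_sum,
      Finset.sum_erase_eq_sub hk, hsum, if_pos rfl]
    field_simp
    ring
  rw [Finset.sum_congr rfl hrow, Finset.sum_sub_distrib, hsum, Finset.sum_const, nsmul_one]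

end Algebra

section Indicators

variable {Ω : Type*}

theorem ind_eq_indicator (Y : Ω → ℕ) (k : ℕ) :
    ind Y k = {ω | Y ω = k}.indicator fun _ => 1 := by
  ext ω
  by_cases h : Y ω = k <;> simp [ind, h]

theorem natCast_eq_sum_mul_ind {Y : Ω → ℕ} {s : Finset ℕ} (hYs : ∀ ω, Y ω ∈ s) (ω : Ω) :
    (Y ω : ℝ) = ∑ k ∈ s, (k : ℝ) * ind Y k ω := by
  simp only [ind, mul_ite, mul_one, mul_zero, Finset.sum_ite_eq, if_pos (hYs ω)]

variable [MeasurableSpace Ω] {P : Measure Ω} {Y : Ω → ℕ}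

theorem memLp_ind [IsFiniteMeasure P] (hY : Measurable Y) (k : ℕ) (p : ENNReal) :
    MemLp (ind Y k) p P := by
  rw [ind_eq_indicator]
  exact memLp_indicator_const p (hY (measurableSet_singleton k)) 1 (Or.inr (measure_ne_top _ _))

theorem measurable_ind (hY : Measurable Y) (k : ℕ) : Measurable (ind Y k) := by
  rw [ind_eq_indicator]
  exact measurable_const.indicator (hY (measurableSet_singleton k))

theorem integral_ind [IsFiniteMeasure P] (hY : Measurable Y) (k : ℕ) :
    ∫ ω, ind Y k ω ∂P = levelProb P Y k := by
  rw [ind_eq_indicator,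
    integral_indicator_const (s := {ω | Y ω = k}) _ (hY (measurableSet_singleton k)), smul_eq_mul,
    mul_one, levelProb, measureReal_def]

theorem integral_ind_sq [IsFiniteMeasure P] (hY : Measurable Y) (k : ℕ) :
    ∫ ω, ind Y k ω ^ 2 ∂P = levelProb P Y k := by
  rw [← integral_ind hY k]
  congr 1 with ω
  by_cases h : Y ω = k <;> simp [ind, h]

theorem integral_mul_ind [IsFiniteMeasure P] (hY : Measurable Y) (f : Ω → ℝ) (l : ℕ) :
    ∫ ω, f ω * ind Y l ω ∂P = ∫ ω in {ω | Y ω = l}, f ω ∂P := by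
  rw [← integral_indicator (s := {ω | Y ω = l}) (hY (measurableSet_singleton l))]
  congr 1 with ω
  by_cases h : Y ω = l <;> simp [ind, h]

theorem sum_levelProb [IsProbabilityMeasure P] (hY : Measurable Y) {s : Finset ℕ}
    (hYs : ∀ ω, Y ω ∈ s) : ∑ k ∈ s, levelProb P Y k = 1 := by
  simp only [levelProb, ← measureReal_def]
  rw [← probReal_univ (μ := P), ← preimage_eq_univ_iff.2 (range_subset_iff.2 hYs)]
  exact sum_measureReal_preimage_singleton s fun k _ => hY (measurableSet_singleton k)

end Indicators

section CondProb

variable {Ω H : Type*} [MeasurableSpace Ω] [MeasurableSpace H] {P : Measure Ω} {X : Ω → H}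
  {Y : Ω → ℕ}

theorem stronglyMeasurable_condProb (k : ℕ) :
    StronglyMeasurable[MeasurableSpace.comap X inferInstance] (condProb P X Y k) :=
  stronglyMeasurable_condExp

theorem exists_measurable_comp_of_ind_ae_eq_condProb {s : Finset ℕ} {a : ℕ} (ha : a ∈ s)
    (hYs : ∀ ω, Y ω ∈ s) (hae : ∀ k ∈ s, ind Y k =ᵐ[P] condProb P X Y k) :
    ∃ h : H → ℕ, Measurable h ∧ (∀ x, h x ∈ s) ∧ Y =ᵐ[P] fun ω => h (X ω) := by
  refine exists_measurable_comp_of_natCast_ae_eq ha hYs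
    (Finset.stronglyMeasurable_fun_sum s fun k _ =>
      (stronglyMeasurable_condProb (P := P) (Y := Y) k).const_mul (k : ℝ)) ?_
  filter_upwards [(Filter.eventually_all_finset s).2 hae] with ω hω
  rw [natCast_eq_sum_mul_ind hYs]
  exact Finset.sum_congr rfl fun k hk => by rw [hω k hk]

variable [IsProbabilityMeasure P]

theorem memLp_condProb (hY : Measurable Y) (k : ℕ) : MemLp (condProb P X Y k) 2 P :=
  (memLp_ind hY k 2).condExp one_le_two

theorem integral_condProb (hX : Measurable X) (hY : Measurable Y) (k : ℕ) :
    ∫ ω, condProb P X Y k ω ∂P = levelProb P Y k :=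
  (integral_condExp hX.comap_le).trans (integral_ind hY k)

theorem cov_condProb (hX : Measurable X) (hY : Measurable Y) (k l : ℕ) :
    cov P (condProb P X Y k) (condProb P X Y l) =
      ∫ ω in {ω | Y ω = l}, (condProb P X Y k ω - levelProb P Y k) ∂P := by
  have hQ : MemLp (condProb P X Y k) 2 P := memLp_condProb hY k
  have htower : ∫ ω, condProb P X Y k ω * condProb P X Y l ω ∂P =
      ∫ ω, condProb P X Y k ω * ind Y l ω ∂P :=
    integral_mul_condExp_of_stronglyMeasurable hX.comap_le (stronglyMeasurable_condProb k) hQ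
      (memLp_ind hY l 2)
  rw [← integral_mul_ind hY, cov, integral_condProb hX hY, integral_condProb hX hY, htower]
  have hQind : Integrable (fun ω => condProb P X Y k ω * ind Y l ω) P :=
    hQ.integrable_mul (memLp_ind hY l 2)
  have hind : Integrable (fun ω => levelProb P Y k * ind Y l ω) P :=
    ((memLp_ind hY l 1).integrable le_rfl).const_mul _
  simp_rw [sub_mul]
  rw [integral_sub hQind hind, integral_const_mul, integral_ind hY]

theorem sum_sq_cov_condProb_div_le (hX : Measurable X) (hY : Measurable Y) {s : Finset ℕ}
    (hYs : ∀ ω, Y ω ∈ s) (k : ℕ) :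
    ∑ l ∈ s, cov P (condProb P X Y k) (condProb P X Y l) ^ 2 / levelProb P Y l ≤
      levelProb P Y k * (1 - levelProb P Y k) -
        ∫ ω, (ind Y k ω - condProb P X Y k ω) ^ 2 ∂P := by
  have hQ : MemLp (condProb P X Y k) 2 P := memLp_condProb hY k
  have hpythagoras : ∫ ω, (ind Y k ω - condProb P X Y k ω) ^ 2 ∂P =
      ∫ ω, ind Y k ω ^ 2 ∂P - ∫ ω, condProb P X Y k ω ^ 2 ∂P :=
    integral_sq_sub_condExp hX.comap_le (memLp_ind hY k 2)
  calc ∑ l ∈ s, cov P (condProb P X Y k) (condProb P X Y l) ^ 2 / levelProb P Y l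
      = ∑ l ∈ s, (∫ ω in Y ⁻¹' {l}, (condProb P X Y k ω - levelProb P Y k) ∂P) ^ 2 /
          P.real (Y ⁻¹' {l}) := by
        simp only [cov_condProb hX hY]
        rfl
    _ ≤ ∫ ω, (condProb P X Y k ω - levelProb P Y k) ^ 2 ∂P :=
        sum_sq_setIntegral_fiber_div_le (hQ.sub (memLp_const _)) hY hYs
    _ = ∫ ω, condProb P X Y k ω ^ 2 ∂P - levelProb P Y k ^ 2 := by
        rw [← integral_condProb hX hY k, ← variance_eq_integral hQ.aemeasurable,
          variance_eq_sub hQ]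
        rfl
    _ = _ := by
        rw [hpythagoras, integral_ind_sq hY]
        ring

theorem sum_sum_sq_cov_condProb_div_add_le (hX : Measurable X) (hY : Measurable Y)
    {s : Finset ℕ} (hYs : ∀ ω, Y ω ∈ s) (hp : ∀ k ∈ s, 0 < levelProb P Y k) :
    ∑ k ∈ s, ∑ l ∈ s, cov P (condProb P X Y k) (condProb P X Y l) ^ 2 /
        (levelProb P Y k * levelProb P Y l) +
      ∑ k ∈ s, (∫ ω, (ind Y k ω - condProb P X Y k ω) ^ 2 ∂P) / levelProb P Y k ≤
      (s.card : ℝ) - 1 := by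
  set p := levelProb P Y
  set C := fun k l => cov P (condProb P X Y k) (condProb P X Y l)
  set D := fun k => ∫ ω, (ind Y k ω - condProb P X Y k ω) ^ 2 ∂P
  calc ∑ k ∈ s, ∑ l ∈ s, C k l ^ 2 / (p k * p l) + ∑ k ∈ s, D k / p k
      = ∑ k ∈ s, (∑ l ∈ s, C k l ^ 2 / p l + D k) / p k := by
        rw [← Finset.sum_add_distrib]
        refine Finset.sum_congr rfl fun k _ => ?_
        rw [add_div, Finset.sum_div]
        simp only [div_div, mul_comm (p k)]
    _ ≤ ∑ k ∈ s, (1 - p k) := Finset.sum_le_sum fun k hk => by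
        rw [div_le_iff₀ (hp k hk)]
        linarith [sum_sq_cov_condProb_div_le (P := P) hX hY hYs k]
    _ = (s.card : ℝ) - 1 := by
        rw [Finset.sum_sub_distrib, sum_levelProb hY hYs, Finset.sum_const, nsmul_one]

theorem ind_ae_eq_condProb_of_psi_eq_one (hX : Measurable X) (hY : Measurable Y) {K : ℕ}
    (hK : 2 ≤ K) (hYr : ∀ ω, Y ω ∈ Finset.Icc 1 K)
    (hp : ∀ k ∈ Finset.Icc 1 K, 0 < levelProb P Y k) (hψ : psi P X Y K = 1) :
    ∀ k ∈ Finset.Icc 1 K, ind Y k =ᵐ[P] condProb P X Y k := by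
  have hK₁ : (K : ℝ) - 1 ≠ 0 := sub_ne_zero.2 (Nat.cast_ne_one.2 (by omega))
  have hbound := sum_sum_sq_cov_condProb_div_add_le hX hY hYr hp
  rw [psi, one_div_mul_eq_div, div_eq_one_iff_eq hK₁] at hψ
  rw [hψ, Nat.card_Icc, Nat.add_sub_cancel, add_le_iff_nonpos_right] at hbound
  have hnonneg : ∀ k ∈ Finset.Icc 1 K,
      0 ≤ (∫ ω, (ind Y k ω - condProb P X Y k ω) ^ 2 ∂P) / levelProb P Y k := fun k hk =>
    div_nonneg (integral_nonneg fun ω => sq_nonneg _) (hp k hk).le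
  have hzero := (Finset.sum_eq_zero_iff_of_nonneg hnonneg).1
    (hbound.antisymm (Finset.sum_nonneg hnonneg))
  intro k hk
  refine ae_eq_of_integral_sub_sq_eq_zero (memLp_ind hY k 2) (memLp_condProb hY k) ?_
  simpa [(hp k hk).ne'] using hzero k hk

theorem condProb_ae_eq_ind_of_ae_eq_comp (hX : Measurable X) {h : H → ℕ} (hh : Measurable h)
    (hYh : Y =ᵐ[P] fun ω => h (X ω)) (k : ℕ) : condProb P X Y k =ᵐ[P] ind Y k := by
  have hind : ind Y k =ᵐ[P] ind (fun ω => h (X ω)) k := by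
    filter_upwards [hYh] with ω hω
    simp only [ind, hω]
  have hsm : StronglyMeasurable[MeasurableSpace.comap X inferInstance]
      (ind (fun ω => h (X ω)) k) :=
    ((measurable_ind hh k).comp (comap_measurable X)).stronglyMeasurable
  calc condProb P X Y k
      =ᵐ[P] P[ind (fun ω => h (X ω)) k|MeasurableSpace.comap X inferInstance] :=
        condExp_congr_ae hind
    _ = ind (fun ω => h (X ω)) k :=
        condExp_of_stronglyMeasurable hX.comap_le hsm
          ((memLp_ind (hh.comp hX) k 1).integrable le_rfl)
    _ =ᵐ[P] ind Y k := hind.symm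

theorem cov_condProb_of_ae_eq_comp (hX : Measurable X) (hY : Measurable Y) {h : H → ℕ}
    (hh : Measurable h) (hYh : Y =ᵐ[P] fun ω => h (X ω)) (k l : ℕ) :
    cov P (condProb P X Y k) (condProb P X Y l) =
      ((if l = k then 1 else 0) - levelProb P Y k) * levelProb P Y l := by
  have hQ_ae := condProb_ae_eq_ind_of_ae_eq_comp hX hh hYh k
  rw [cov_condProb hX hY]
  calc ∫ ω in {ω | Y ω = l}, (condProb P X Y k ω - levelProb P Y k) ∂P
      = ∫ ω in {ω | Y ω = l}, (ind Y k ω - levelProb P Y k) ∂P := by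
        refine integral_congr_ae (ae_restrict_of_ae ?_)
        filter_upwards [hQ_ae] with ω hω
        rw [hω]
    _ = ∫ _ in {ω | Y ω = l}, ((if l = k then 1 else 0) - levelProb P Y k) ∂P := by
        refine setIntegral_congr_fun (hY (measurableSet_singleton l)) fun ω hω => ?_
        rw [ind, show Y ω = l from hω]
    _ = _ := by
        rw [setIntegral_const, smul_eq_mul, mul_comm]
        rfl

theorem psi_eq_one_of_ae_eq_comp (hX : Measurable X) (hY : Measurable Y) {K : ℕ} (hK : 2 ≤ K)
    (hYr : ∀ ω, Y ω ∈ Finset.Icc 1 K) (hp : ∀ k ∈ Finset.Icc 1 K, 0 < levelProb P Y k)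
    {h : H → ℕ} (hh : Measurable h) (hYh : Y =ᵐ[P] fun ω => h (X ω)) : psi P X Y K = 1 := by
  simp only [psi, cov_condProb_of_ae_eq_comp hX hY hh hYh]
  rw [sum_sum_sq_sub_mul_div_mul hp (sum_levelProb hY hYr), Nat.card_Icc, Nat.add_sub_cancel,
    one_div_mul_eq_div, div_self (sub_ne_zero.2 (Nat.cast_ne_one.2 (by omega)))]

end CondProb

theorem psi_eq_one_iff_function_general {Ω H : Type*} [MeasurableSpace Ω]
    [MeasurableSpace H]
    (P : Measure Ω) [IsProbabilityMeasure P] (K : ℕ) (hK : 2 ≤ K)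
    (X : Ω → H) (Y : Ω → ℕ) (hX : Measurable X) (hY : Measurable Y)
    (hYr : ∀ ω, Y ω ∈ Finset.Icc 1 K)
    (hp : ∀ k ∈ Finset.Icc 1 K, 0 < P {ω | Y ω = k}) :
    psi P X Y K = 1 ↔
      ∃ h : H → ℕ, Measurable h ∧ (∀ x, h x ∈ Finset.Icc 1 K) ∧
        Y =ᵐ[P] fun ω => h (X ω) := by
  have hpos : ∀ k ∈ Finset.Icc 1 K, 0 < levelProb P Y k := fun k hk =>
    ENNReal.toReal_pos (hp k hk).ne' (measure_ne_top _ _)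
  constructor
  · intro hψ
    exact exists_measurable_comp_of_ind_ae_eq_condProb (Finset.mem_Icc.2 ⟨le_rfl, by omega⟩) hYr
      (ind_ae_eq_condProb_of_psi_eq_one hX hY hK hYr hpos hψ)
  · rintro ⟨h, hh, -, hYh⟩
    exact psi_eq_one_of_ae_eq_comp hX hY hK hYr hpos hh hYh

/-- Theorem 1, part (M3): `ψ(X,Y) = 1` if and only if `Y` is a.s. a Borel measurable
function of `X` with values in `{1,…,K}`. -/
theorem psi_eq_one_iff_function {Ω H : Type*} [MeasurableSpace Ω] [MetricSpace H]
    [MeasurableSpace H] [BorelSpace H] [TopologicalSpace.SeparableSpace H]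
    (P : Measure Ω) [IsProbabilityMeasure P] (K : ℕ) (hK : 2 ≤ K)
    (X : Ω → H) (Y : Ω → ℕ) (hX : Measurable X) (hY : Measurable Y)
    (hYr : ∀ ω, Y ω ∈ Finset.Icc 1 K)
    (hp : ∀ k ∈ Finset.Icc 1 K, 0 < P {ω | Y ω = k}) :
    psi P X Y K = 1 ↔
      ∃ h : H → ℕ, Measurable h ∧ (∀ x, h x ∈ Finset.Icc 1 K) ∧
        Y =ᵐ[P] fun ω => h (X ω) :=
  psi_eq_one_iff_function_general P K hK X Y hX hY hYr hp
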